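/- Fix q ∈ (0,1), β ∈ [0,∞), γ ∈ (0,∞), and ζ ∈ (0, (min{q,1−q})^{1/(β+1)}/γ]. Let F be the CDF of a (β,γ,ζ)-clustered probability distribution on [0,∞) with finite mean, and let â be the SAA decision based on n IID samples from F. For any δ ∈ (0,1), if n > log(2/δ) / (2(γζ)^{2β+2}), then with probability at least 1−δ, the additive regret satisfies L(â) − L(a*) ≤ (1/γ)·(log(2/δ)/(2n))^{(β+2)/(2β+2)}. -/

import Mathlib

/-!
Let `ε = √(log(2/δ)/(2n))` and `r = ε^{1/(β+1)}/γ`; the bound on `n` is exactly `r < ζ`.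
Let `s₁ ≤ s₂` be the `(q-ε)`- and `(q+ε)`-quantiles of `F`. Within `ζ` of `a*` the clustered
condition forces `|F - q| > ε` at distance more than `r` from `a*`, so `a* - r ≤ s₁` and
`s₂ ≤ a* + r`, while `|F - q| ≤ ε` on `[s₁, s₂)`. By Hoeffding's inequality, with probability at
least `1 - δ` both `F̂(s₂) ≥ q` and fewer than `nq` samples lie below `s₁`, which places `â` in
`[s₁, s₂]`. Comparing the Newsvendor losses at `â` and `a*` pointwise, the regret is at most
`|â - a*|` times the deviation of `F` from `q` between them, i.e. at most `ε r`, which is the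
claimed bound.
-/

open MeasureTheory Set

noncomputable section

/-- The Newsvendor loss `ℓ(a,Z) = q·max{Z−a,0} + (1−q)·max{a−Z,0}` with critical quantile `q`. -/
def nvLoss (q a z : ℝ) : ℝ := q * max (z - a) 0 + (1 - q) * max (a - z) 0

/-- The expected Newsvendor loss `L(a)` under the demand distribution `μ`. -/
def expLoss (q : ℝ) (μ : Measure ℝ) (a : ℝ) : ℝ := ∫ z, nvLoss q a z ∂μ

/-- The CDF of the demand distribution `μ`. -/
def cdf' (μ : Measure ℝ) (z : ℝ) : ℝ := (μ (Iic z)).toReal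

/-- The optimal decision `a* = inf {a ≥ 0 : F(a) ≥ q}`. -/
def optDec (q : ℝ) (μ : Measure ℝ) : ℝ := sInf {a : ℝ | 0 ≤ a ∧ q ≤ cdf' μ a}

/-- The empirical CDF of the samples `ω : Fin n → ℝ`. -/
def empCdf (n : ℕ) (ω : Fin n → ℝ) (z : ℝ) : ℝ :=
  (∑ i : Fin n, if ω i ≤ z then (1 : ℝ) else 0) / n

/-- The SAA (sample average approximation) decision `â = inf {a ≥ 0 : F̂(a) ≥ q}`. -/
def saa (q : ℝ) (n : ℕ) (ω : Fin n → ℝ) : ℝ := sInf {a : ℝ | 0 ≤ a ∧ q ≤ empCdf n ω a}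

/-- The joint law of `n` iid samples from `μ`. -/
def iid (μ : Measure ℝ) (n : ℕ) : Measure (Fin n → ℝ) := Measure.pi fun _ => μ

/-- A distribution `μ` is `(β,γ,ζ)`-clustered if
`|a − a*| ≤ (1/γ)·|F(a) − q|^{1/(β+1)}` for all `a ∈ [a*−ζ, a*+ζ]`. -/
def Clustered (q β γ ζ : ℝ) (μ : Measure ℝ) : Prop :=
  ∀ a ∈ Icc (optDec q μ - ζ) (optDec q μ + ζ),
    |a - optDec q μ| ≤ (1 / γ) * |cdf' μ a - q| ^ ((1 : ℝ) / (β + 1))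

open ProbabilityTheory

section Hoeffding

variable {α ι : Type*} [MeasurableSpace α] [Fintype ι] (μ : Measure α) [IsProbabilityMeasure μ]

theorem measureReal_pi_sum_sub_integral_ge_le {f : α → ℝ} {a b : ℝ} (hf : Measurable f)
    (hfab : ∀ x, f x ∈ Icc a b) {ε : ℝ} (hε : 0 ≤ ε) :
    (Measure.pi fun _ : ι => μ).real {ω | Fintype.card ι * ε ≤ ∑ i, (f (ω i) - μ[f])} ≤
      Real.exp (-2 * Fintype.card ι * ε ^ 2 / (b - a) ^ 2) := by
  have hsubG : HasSubgaussianMGF (fun x => f x - μ[f]) ((‖b - a‖₊ / 2) ^ 2) μ :=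
    hasSubgaussianMGF_of_mem_Icc hf.aemeasurable (ae_of_all _ hfab)
  have hindep := iIndepFun_pi (μ := fun _ : ι => μ) (X := fun _ x => f x - μ[f])
    fun _ => by fun_prop
  refine (HasSubgaussianMGF.measure_sum_ge_le_of_iIndepFun hindep (s := Finset.univ)
    (fun i _ => HasSubgaussianMGF.of_map (measurable_pi_apply i).aemeasurable
      (by rwa [(measurePreserving_eval (fun _ : ι => μ) i).map_eq])) (by positivity)).trans_eq ?_
  simp only [Finset.sum_const, Finset.card_univ, nsmul_eq_mul, NNReal.coe_mul, NNReal.coe_natCast,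
    NNReal.coe_pow, NNReal.coe_div, coe_nnnorm, Real.norm_eq_abs, NNReal.coe_ofNat, div_pow, sq_abs]
  rcases eq_or_ne (Fintype.card ι : ℝ) 0 with hι | hι
  · simp [hι]
  rcases eq_or_ne (b - a) 0 with hab | hab
  · simp [hab]
  congr 1
  field_simp

variable {S : Set α} {ε : ℝ}

theorem measureReal_pi_le_sum_indicator_le (hS : MeasurableSet S) (hε : 0 ≤ ε) :
    (Measure.pi fun _ : ι => μ).real
        {ω | Fintype.card ι * (μ.real S + ε) ≤ ∑ i, S.indicator 1 (ω i)} ≤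
      Real.exp (-2 * Fintype.card ι * ε ^ 2) := by
  have h := measureReal_pi_sum_sub_integral_ge_le (ι := ι) μ (f := S.indicator 1) (a := 0) (b := 1)
    (measurable_one.indicator hS) (fun x => ⟨indicator_nonneg (fun _ _ => zero_le_one) x,
      indicator_le_self' (fun _ _ => zero_le_one) x⟩) hε
  rw [integral_indicator_one hS, sub_zero, one_pow, div_one] at h
  refine (measureReal_mono fun ω hω => ?_).trans h
  simp only [mem_ofPred_eq, Finset.sum_sub_distrib, Finset.sum_const, Finset.card_univ,
    nsmul_eq_mul] at hω ⊢
  linarith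

theorem measureReal_pi_sum_indicator_le_le (hS : MeasurableSet S) (hε : 0 ≤ ε) :
    (Measure.pi fun _ : ι => μ).real
        {ω | ∑ i, S.indicator 1 (ω i) ≤ Fintype.card ι * (μ.real S - ε)} ≤
      Real.exp (-2 * Fintype.card ι * ε ^ 2) := by
  have h := measureReal_pi_sum_sub_integral_ge_le (ι := ι) μ (f := fun x => -S.indicator 1 x)
    (a := -1) (b := 0) (measurable_one.indicator hS).neg
    (fun x => ⟨neg_le_neg (indicator_le_self' (fun _ _ => zero_le_one) x),
      neg_nonpos.2 (indicator_nonneg (fun _ _ => zero_le_one) x)⟩) hε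
  rw [integral_neg, integral_indicator_one hS, sub_neg_eq_add, zero_add, one_pow, div_one] at h
  refine (measureReal_mono fun ω hω => ?_).trans h
  simp only [mem_ofPred_eq, Finset.sum_sub_distrib, Finset.sum_neg_distrib,
    Finset.sum_const, Finset.card_univ, nsmul_eq_mul] at hω ⊢
  linarith

end Hoeffding

theorem empCdf_eq_sum_indicator (n : ℕ) (ω : Fin n → ℝ) (z : ℝ) :
    empCdf n ω z = (∑ i, (Iic z).indicator 1 (ω i)) / n := by
  simp only [empCdf, indicator_apply, mem_Iic, Pi.one_apply]

theorem saa_le_of_le_empCdf {q : ℝ} {n : ℕ} {ω : Fin n → ℝ} {s : ℝ} (hs : 0 ≤ s)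
    (h : q ≤ empCdf n ω s) : saa q n ω ≤ s :=
  csInf_le ⟨0, fun _ ha => ha.1⟩ ⟨hs, h⟩

theorem le_saa_of_sum_indicator_lt {q : ℝ} {n : ℕ} {ω : Fin n → ℝ} {s : ℝ} (hn : 0 < n)
    (hq : q ≤ 1) (h : ∑ i, (Iio s).indicator 1 (ω i) < n * q) : s ≤ saa q n ω := by
  have hn' : (0 : ℝ) < n := Nat.cast_pos.2 hn
  have hne : {a : ℝ | 0 ≤ a ∧ q ≤ empCdf n ω a}.Nonempty := by
    refine ⟨∑ i, |ω i|, Finset.sum_nonneg fun i _ => abs_nonneg _, ?_⟩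
    have hle : ∀ i, ω i ≤ ∑ j, |ω j| := fun i =>
      (le_abs_self _).trans (Finset.single_le_sum (fun j _ => abs_nonneg (ω j)) (Finset.mem_univ i))
    simp only [empCdf, hle, if_true, Finset.sum_const, Finset.card_univ, Fintype.card_fin,
      nsmul_eq_mul, mul_one, div_self hn'.ne', hq]
  refine le_csInf hne fun a ⟨_, ha⟩ => not_lt.1 fun has => ?_
  rw [empCdf_eq_sum_indicator, le_div_iff₀ hn'] at ha
  have hmono : ∑ i, (Iic a).indicator 1 (ω i) ≤ ∑ i, (Iio s).indicator (1 : ℝ → ℝ) (ω i) :=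
    Finset.sum_le_sum fun i _ =>
      indicator_le_indicator_of_subset (Iic_subset_Iio.2 has) (fun _ => zero_le_one) _
  linarith

instance (μ : Measure ℝ) [IsProbabilityMeasure μ] (n : ℕ) : IsProbabilityMeasure (iid μ n) := by
  unfold iid; infer_instance

theorem measureReal_empCdf_lt_le (μ : Measure ℝ) [IsProbabilityMeasure μ] (n : ℕ) {q s ε : ℝ}
    (hε : 0 ≤ ε) (hs : q + ε ≤ cdf' μ s) :
    (iid μ n).real {ω | empCdf n ω s < q} ≤ Real.exp (-2 * n * ε ^ 2) := by
  have h := measureReal_pi_sum_indicator_le_le (ι := Fin n) μ measurableSet_Iic (S := Iic s) hε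
  rw [Fintype.card_fin] at h
  refine (measureReal_mono fun ω hω => ?_).trans h
  rcases n.eq_zero_or_pos with rfl | hn
  · simp
  rw [mem_ofPred_eq, empCdf_eq_sum_indicator, div_lt_iff₀ (Nat.cast_pos.2 hn)] at hω
  have hsn := mul_le_mul_of_nonneg_left (le_sub_iff_add_le.2 hs) (Nat.cast_nonneg (α := ℝ) n)
  exact (hω.trans_eq (mul_comm _ _)).le.trans hsn

theorem measureReal_le_sum_indicator_Iio_le (μ : Measure ℝ) [IsProbabilityMeasure μ] (n : ℕ)
    {q s ε : ℝ} (hε : 0 ≤ ε) (hs : μ.real (Iio s) + ε ≤ q) :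
    (iid μ n).real {ω | n * q ≤ ∑ i, (Iio s).indicator 1 (ω i)} ≤ Real.exp (-2 * n * ε ^ 2) := by
  have h := measureReal_pi_le_sum_indicator_le (ι := Fin n) μ measurableSet_Iio (S := Iio s) hε
  rw [Fintype.card_fin] at h
  refine (measureReal_mono fun ω (hω : (n : ℝ) * q ≤ _) => ?_).trans h
  exact (mul_le_mul_of_nonneg_left hs n.cast_nonneg).trans hω

theorem measureReal_Iio_le_of_forall_lt (μ : Measure ℝ) [IsProbabilityMeasure μ] {x c : ℝ}
    (h : ∀ u < x, cdf' μ u ≤ c) : μ.real (Iio x) ≤ c := by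
  have hlim : Function.leftLim (cdf μ) x ≤ c :=
    le_of_tendsto ((cdf μ).mono.tendsto_leftLim x)
      (eventually_nhdsWithin_of_forall fun u hu => (cdf_eq_real μ u).trans_le (h u hu))
  rw [measureReal_def, ← measure_cdf μ, (cdf μ).measure_Iio (tendsto_cdf_atBot μ), sub_zero,
    ENNReal.toReal_ofReal ((cdf_nonneg μ (x - 1)).trans ((cdf μ).mono.le_leftLim (by linarith)))]
  exact hlim

theorem le_cdf'_iff_sInf_le (μ : Measure ℝ) [IsProbabilityMeasure μ] {p : ℝ} (hp0 : 0 < p)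
    (hp1 : p < 1) (u : ℝ) : p ≤ cdf' μ u ↔ sInf {x | p ≤ cdf' μ x} ≤ u := by
  have hcdf : cdf' μ = cdf μ := funext fun x => (cdf_eq_real μ x).symm
  rw [hcdf]
  have hne : {x | p ≤ cdf μ x}.Nonempty :=
    ((tendsto_cdf_atTop μ).eventually (eventually_ge_nhds hp1)).exists
  have hbdd : BddBelow {x | p ≤ cdf μ x} := by
    obtain ⟨x₀, hx₀⟩ :=
      ((tendsto_cdf_atBot μ).eventually (eventually_lt_nhds hp0)).exists_forall_of_atBot
    exact ⟨x₀, fun x hx => le_of_not_gt fun hlt => (hx₀ x hlt.le).not_ge hx⟩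
  refine ⟨fun h => csInf_le hbdd h, fun h => ?_⟩
  refine ge_of_tendsto (((cdf μ).right_continuous u).mono_left
    (nhdsWithin_mono u Ioi_subset_Ici_self)) (eventually_nhdsWithin_of_forall fun v hv => ?_)
  obtain ⟨x, hx, hxv⟩ := exists_lt_of_csInf_lt hne (h.trans_lt hv)
  exact hx.trans ((cdf μ).mono hxv.le)

theorem nvLoss_sub_le_of_le (q : ℝ) {a b : ℝ} (hab : a ≤ b) (z : ℝ) :
    nvLoss q b z - nvLoss q a z ≤ (b - a) * ((Iio b).indicator 1 z - q) := by
  unfold nvLoss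
  by_cases hzb : z < b
  · rw [indicator_of_mem (show z ∈ Iio b from hzb), Pi.one_apply,
      max_eq_right (by linarith : z - b ≤ 0), max_eq_left (by linarith : 0 ≤ b - z)]
    rcases le_total z a with hza | hza
    · rw [max_eq_right (by linarith : z - a ≤ 0), max_eq_left (by linarith : 0 ≤ a - z)]
      linarith
    · rw [max_eq_left (by linarith : 0 ≤ z - a), max_eq_right (by linarith : a - z ≤ 0)]
      linarith
  · rw [indicator_of_notMem (show z ∉ Iio b from hzb), max_eq_left (by linarith : 0 ≤ z - b),
      max_eq_left (by linarith : 0 ≤ z - a), max_eq_right (by linarith : b - z ≤ 0),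
      max_eq_right (by linarith : a - z ≤ 0)]
    linarith

theorem nvLoss_sub_le_of_ge (q : ℝ) {a b : ℝ} (hba : b ≤ a) (z : ℝ) :
    nvLoss q b z - nvLoss q a z ≤ (a - b) * (q - (Iic b).indicator 1 z) := by
  unfold nvLoss
  by_cases hzb : z ≤ b
  · rw [indicator_of_mem (show z ∈ Iic b from hzb), Pi.one_apply,
      max_eq_right (by linarith : z - b ≤ 0), max_eq_right (by linarith : z - a ≤ 0),
      max_eq_left (by linarith : 0 ≤ b - z), max_eq_left (by linarith : 0 ≤ a - z)]
    linarith
  · rw [indicator_of_notMem (show z ∉ Iic b from hzb), max_eq_left (by linarith : 0 ≤ z - b),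
      max_eq_right (by linarith : b - z ≤ 0)]
    rcases le_total z a with hza | hza
    · rw [max_eq_right (by linarith : z - a ≤ 0), max_eq_left (by linarith : 0 ≤ a - z)]
      linarith
    · rw [max_eq_left (by linarith : 0 ≤ z - a), max_eq_right (by linarith : a - z ≤ 0)]
      linarith

theorem integrable_nvLoss (q a : ℝ) {μ : Measure ℝ} [IsFiniteMeasure μ]
    (hmean : Integrable (fun z => z) μ) : Integrable (nvLoss q a) μ :=
  (((hmean.sub (integrable_const a)).pos_part).const_mul q).add
    ((((integrable_const a).sub hmean).pos_part).const_mul (1 - q))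

theorem expLoss_sub_expLoss_le_integral (q : ℝ) {μ : Measure ℝ} [IsFiniteMeasure μ]
    (hmean : Integrable (fun z => z) μ) {a b : ℝ} {g : ℝ → ℝ} (hg : Integrable g μ)
    (h : ∀ z, nvLoss q b z - nvLoss q a z ≤ g z) :
    expLoss q μ b - expLoss q μ a ≤ ∫ z, g z ∂μ := by
  rw [expLoss, expLoss, ← integral_sub (integrable_nvLoss q b hmean) (integrable_nvLoss q a hmean)]
  exact integral_mono ((integrable_nvLoss q b hmean).sub (integrable_nvLoss q a hmean)) hg h

section Loss

variable {μ : Measure ℝ} [IsProbabilityMeasure μ]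

theorem expLoss_sub_expLoss_le_of_le (q : ℝ) (hmean : Integrable (fun z => z) μ) {a b : ℝ}
    (hab : a ≤ b) : expLoss q μ b - expLoss q μ a ≤ (b - a) * (μ.real (Iio b) - q) := by
  have hind : Integrable ((Iio b).indicator 1) μ :=
    (integrable_const (1 : ℝ)).indicator measurableSet_Iio
  refine (expLoss_sub_expLoss_le_integral q hmean
    (g := fun z => (b - a) * ((Iio b).indicator 1 z - q))
    ((hind.sub (integrable_const q)).const_mul _)
    (nvLoss_sub_le_of_le q hab)).trans_eq ?_
  rw [integral_const_mul, integral_sub hind (integrable_const q),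
    integral_indicator_one measurableSet_Iio]
  simp

theorem expLoss_sub_expLoss_le_of_ge (q : ℝ) (hmean : Integrable (fun z => z) μ) {a b : ℝ}
    (hba : b ≤ a) : expLoss q μ b - expLoss q μ a ≤ (a - b) * (q - cdf' μ b) := by
  have hind : Integrable ((Iic b).indicator 1) μ :=
    (integrable_const (1 : ℝ)).indicator measurableSet_Iic
  refine (expLoss_sub_expLoss_le_integral q hmean
    (g := fun z => (a - b) * (q - (Iic b).indicator 1 z))
    (((integrable_const q).sub hind).const_mul _)
    (nvLoss_sub_le_of_ge q hba)).trans_eq ?_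
  rw [integral_const_mul, integral_sub (integrable_const q) hind,
    integral_indicator_one measurableSet_Iic]
  simp [cdf', measureReal_def]

end Loss

section Clustered

variable {q β γ ζ : ℝ} {μ : Measure ℝ}

theorem Clustered.abs_sub_optDec_le (hclus : Clustered q β γ ζ μ) (hβ : -1 ≤ β) (hγ : 0 ≤ γ)
    {u ε : ℝ} (hu : |u - optDec q μ| ≤ ζ) (hF : |cdf' μ u - q| ≤ ε) :
    |u - optDec q μ| ≤ 1 / γ * ε ^ (1 / (β + 1)) := by
  obtain ⟨hu₁, hu₂⟩ := abs_le.1 hu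
  refine (hclus u ⟨by linarith, by linarith⟩).trans (mul_le_mul_of_nonneg_left ?_ (by positivity))
  exact Real.rpow_le_rpow (abs_nonneg _) hF (one_div_nonneg.2 (by linarith))

theorem nonneg_of_cdf'_pos (hsupp : μ (Iio 0) = 0) {x : ℝ} (hx : 0 < cdf' μ x) : 0 ≤ x :=
  not_lt.1 fun hx0 => hx.ne' <| by
    rw [cdf', measure_mono_null (Iic_subset_Iio.2 hx0) hsupp, ENNReal.toReal_zero]

variable [IsProbabilityMeasure μ]

theorem le_cdf'_iff_optDec_le (hsupp : μ (Iio 0) = 0) (hq : q ∈ Ioo (0 : ℝ) 1) (u : ℝ) :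
    q ≤ cdf' μ u ↔ optDec q μ ≤ u := by
  have hopt : optDec q μ = sInf {x | q ≤ cdf' μ x} :=
    congrArg sInf <| ext fun x =>
      ⟨And.right, fun hx => ⟨nonneg_of_cdf'_pos hsupp (hq.1.trans_le hx), hx⟩⟩
  rw [hopt]
  exact le_cdf'_iff_sInf_le μ hq.1 hq.2 u

theorem Clustered.sInf_le_optDec_add (hclus : Clustered q β γ ζ μ) (hβ : -1 ≤ β) (hγ : 0 ≤ γ)
    (hsupp : μ (Iio 0) = 0) (hq : q ∈ Ioo (0 : ℝ) 1) {ε : ℝ} (hε : 0 ≤ ε) (hεq : q + ε < 1)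
    (hr : 1 / γ * ε ^ (1 / (β + 1)) < ζ) :
    sInf {x | q + ε ≤ cdf' μ x} ≤ optDec q μ + 1 / γ * ε ^ (1 / (β + 1)) := by
  set r := 1 / γ * ε ^ (1 / (β + 1))
  have hr0 : 0 ≤ r := by positivity
  by_contra! h
  obtain ⟨c, hrc, hc⟩ := exists_between (lt_min h (by linarith : optDec q μ + r < optDec q μ + ζ))
  have hcq : cdf' μ c < q + ε := not_le.1 fun hle =>
    (lt_min_iff.1 hc).1.not_ge ((le_cdf'_iff_sInf_le μ (by linarith [hq.1]) hεq c).1 hle)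
  have hqc : q ≤ cdf' μ c := (le_cdf'_iff_optDec_le hsupp hq c).2 (by linarith)
  have := hclus.abs_sub_optDec_le hβ hγ (u := c) (ε := ε)
    (abs_le.2 ⟨by linarith, by linarith [(lt_min_iff.1 hc).2]⟩)
    (abs_le.2 ⟨by linarith, by linarith⟩)
  rw [abs_of_nonneg (by linarith)] at this
  linarith

theorem Clustered.optDec_sub_le_sInf (hclus : Clustered q β γ ζ μ) (hβ : -1 ≤ β) (hγ : 0 ≤ γ)
    (hsupp : μ (Iio 0) = 0) (hq : q ∈ Ioo (0 : ℝ) 1) {ε : ℝ} (hε : 0 ≤ ε) (hεq : 0 < q - ε)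
    (hr : 1 / γ * ε ^ (1 / (β + 1)) < ζ) :
    optDec q μ - 1 / γ * ε ^ (1 / (β + 1)) ≤ sInf {x | q - ε ≤ cdf' μ x} := by
  set r := 1 / γ * ε ^ (1 / (β + 1))
  have hr0 : 0 ≤ r := by positivity
  by_contra! h
  obtain ⟨c, hc, hcr⟩ := exists_between (max_lt h (by linarith : optDec q μ - ζ < optDec q μ - r))
  have hcq : q - ε ≤ cdf' μ c :=
    (le_cdf'_iff_sInf_le μ hεq (by linarith [hq.2]) c).2 (max_lt_iff.1 hc).1.le
  have hqc : cdf' μ c < q := not_le.1 fun hle =>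
    ((le_cdf'_iff_optDec_le hsupp hq c).1 hle).not_gt (by linarith)
  have := hclus.abs_sub_optDec_le hβ hγ (u := c) (ε := ε)
    (abs_le.2 ⟨by linarith [(max_lt_iff.1 hc).2], by linarith⟩)
    (abs_le.2 ⟨by linarith, by linarith⟩)
  rw [abs_of_nonpos (by linarith)] at this
  linarith

end Clustered

theorem expLoss_sub_expLoss_le_of_mem_Icc {q : ℝ} {μ : Measure ℝ} [IsProbabilityMeasure μ]
    (hmean : Integrable (fun z => z) μ) {a b s₁ s₂ ε r : ℝ} (hε : 0 ≤ ε)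
    (hb : b ∈ Icc s₁ s₂) (hs₁ : a - r ≤ s₁) (hs₂ : s₂ ≤ a + r)
    (hF₁ : q - ε ≤ cdf' μ s₁) (hF₂ : μ.real (Iio s₂) ≤ q + ε) :
    expLoss q μ b - expLoss q μ a ≤ ε * r := by
  rcases le_total a b with hab | hba
  · have hmono : μ.real (Iio b) ≤ μ.real (Iio s₂) := measureReal_mono (Iio_subset_Iio hb.2)
    have hF : μ.real (Iio b) - q ≤ ε := by linarith
    calc expLoss q μ b - expLoss q μ a ≤ (b - a) * (μ.real (Iio b) - q) :=
          expLoss_sub_expLoss_le_of_le q hmean hab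
      _ ≤ (b - a) * ε := mul_le_mul_of_nonneg_left hF (sub_nonneg.2 hab)
      _ ≤ ε * r := by nlinarith [hb.2]
  · have hmono : cdf' μ s₁ ≤ cdf' μ b := measureReal_mono (Iic_subset_Iic.2 hb.1)
    have hF : q - cdf' μ b ≤ ε := by linarith
    calc expLoss q μ b - expLoss q μ a ≤ (a - b) * (q - cdf' μ b) :=
          expLoss_sub_expLoss_le_of_ge q hmean hba
      _ ≤ (a - b) * ε := mul_le_mul_of_nonneg_left hF (sub_nonneg.2 hba)
      _ ≤ ε * r := by nlinarith [hb.1]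

theorem ofReal_one_sub_le_of_measureReal_compl_le {Ω : Type*} [MeasurableSpace Ω]
    (P : Measure Ω) [IsProbabilityMeasure P] {G : Set Ω} {δ : ℝ} (h : P.real Gᶜ ≤ δ) :
    ENNReal.ofReal (1 - δ) ≤ P G := by
  have hsplit : P.real univ ≤ P.real G + P.real Gᶜ := by
    simpa only [union_compl_self] using measureReal_union_le (μ := P) G Gᶜ
  rw [probReal_univ] at hsplit
  rw [ENNReal.ofReal_le_iff_le_toReal (measure_ne_top P G)]
  exact (by linarith : 1 - δ ≤ P.real G)

theorem Clustered.measureReal_regret_gt_le {q β γ ζ : ℝ} {μ : Measure ℝ}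
    [IsProbabilityMeasure μ]
    (hclus : Clustered q β γ ζ μ) (hβ : -1 ≤ β) (hγ : 0 ≤ γ) (hsupp : μ (Iio 0) = 0)
    (hmean : Integrable (fun z => z) μ) (hq : q ∈ Ioo (0 : ℝ) 1) {n : ℕ} (hn : 0 < n) {ε : ℝ}
    (hε : 0 ≤ ε) (hεq : ε < min q (1 - q)) (hr : 1 / γ * ε ^ (1 / (β + 1)) < ζ) :
    (iid μ n).real {ω | expLoss q μ (saa q n ω) - expLoss q μ (optDec q μ) ≤
        ε * (1 / γ * ε ^ (1 / (β + 1)))}ᶜ ≤ 2 * Real.exp (-2 * n * ε ^ 2) := by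
  obtain ⟨hεq₁, hεq₂⟩ := lt_min_iff.1 hεq
  set s₁ := sInf {x | q - ε ≤ cdf' μ x}
  set s₂ := sInf {x | q + ε ≤ cdf' μ x}
  have hle₁ := le_cdf'_iff_sInf_le μ (p := q - ε) (sub_pos.2 hεq₁) (by linarith [hq.2])
  have hle₂ := le_cdf'_iff_sInf_le μ (p := q + ε) (by linarith [hq.1]) (by linarith)
  have hs₁ := hclus.optDec_sub_le_sInf hβ hγ hsupp hq hε (sub_pos.2 hεq₁) hr
  have hs₂ := hclus.sInf_le_optDec_add hβ hγ hsupp hq hε (by linarith) hr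
  have hIio₁ : μ.real (Iio s₁) ≤ q - ε := measureReal_Iio_le_of_forall_lt μ fun u hu =>
    (not_le.1 fun h => hu.not_ge ((hle₁ u).1 h)).le
  have hIio₂ : μ.real (Iio s₂) ≤ q + ε := measureReal_Iio_le_of_forall_lt μ fun u hu =>
    (not_le.1 fun h => hu.not_ge ((hle₂ u).1 h)).le
  have hs₂0 : 0 ≤ s₂ :=
    nonneg_of_cdf'_pos hsupp (lt_of_lt_of_le (by linarith [hq.1]) ((hle₂ s₂).2 le_rfl))
  have hsub : {ω | expLoss q μ (saa q n ω) - expLoss q μ (optDec q μ) ≤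
      ε * (1 / γ * ε ^ (1 / (β + 1)))}ᶜ ⊆
      {ω | empCdf n ω s₂ < q} ∪ {ω | n * q ≤ ∑ i, (Iio s₁).indicator 1 (ω i)} := by
    intro ω hω
    by_contra! h
    simp only [mem_union, mem_ofPred_eq, not_or, not_lt, not_le] at h
    exact hω (expLoss_sub_expLoss_le_of_mem_Icc hmean hε
      ⟨le_saa_of_sum_indicator_lt hn hq.2.le h.2, saa_le_of_le_empCdf hs₂0 h.1⟩
      hs₁ hs₂ ((hle₁ s₁).2 le_rfl) hIio₂)
  calc _ ≤ _ := measureReal_mono hsub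
    _ ≤ _ := measureReal_union_le _ _
    _ ≤ _ := add_le_add (measureReal_empCdf_lt_le μ n hε ((hle₂ s₂).2 le_rfl))
        (measureReal_le_sum_indicator_Iio_le μ n hε (by linarith))
    _ = _ := (two_mul _).symm

section Parameters

variable {β t : ℝ}

theorem sqrt_rpow_one_div (ht : 0 ≤ t) (hβ : β + 1 ≠ 0) :
    √t ^ (1 / (β + 1)) = t ^ (2 * β + 2)⁻¹ := by
  rw [Real.sqrt_eq_rpow, ← Real.rpow_mul ht]
  congr 1
  field_simp

theorem one_div_mul_sqrt_rpow_lt {γ ζ : ℝ} (hβ : 0 < β + 1) (hγ : 0 < γ) (hζ : 0 ≤ ζ)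
    (ht : 0 ≤ t) (h : t < (γ * ζ) ^ (2 * β + 2)) : 1 / γ * √t ^ (1 / (β + 1)) < ζ := by
  rwa [sqrt_rpow_one_div ht hβ.ne', one_div_mul_eq_div, div_lt_iff₀' hγ,
    Real.rpow_inv_lt_iff_of_pos ht (mul_nonneg hγ.le hζ) (by linarith)]

theorem sqrt_mul_one_div_mul_sqrt_rpow (γ : ℝ) (hβ : 0 < β + 1) (ht : 0 ≤ t) :
    √t * (1 / γ * √t ^ (1 / (β + 1))) = 1 / γ * t ^ ((β + 2) / (2 * β + 2)) := by
  rw [sqrt_rpow_one_div ht hβ.ne', Real.sqrt_eq_rpow, mul_left_comm,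
    ← Real.rpow_add' ht (add_pos (by norm_num) (inv_pos.2 (by linarith))).ne']
  congr 2
  field_simp
  ring

end Parameters

/-- High-probability additive regret upper bound for SAA on
`(β,γ,ζ)`-clustered distributions: if `n > log(2/δ)/(2(γζ)^{2β+2})`, then with probability
at least `1−δ`, `L(â) − L(a*) ≤ (1/γ)·(log(2/δ)/(2n))^{(β+2)/(2β+2)}`. -/
theorem saa_high_prob_additive_regret_clustered
    (q β γ ζ : ℝ) (hq : q ∈ Ioo (0:ℝ) 1) (hβ : 0 ≤ β) (hγ : 0 < γ)
    (hζ : ζ ∈ Ioc 0 ((min q (1 - q)) ^ ((1:ℝ)/(β+1)) / γ))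
    (μ : Measure ℝ) [IsProbabilityMeasure μ] (hsupp : μ (Iio 0) = 0)
    (hmean : Integrable (fun z => z) μ)
    (hclus : Clustered q β γ ζ μ)
    (n : ℕ) (δ : ℝ) (hδ : δ ∈ Ioo (0:ℝ) 1)
    (hn : Real.log (2/δ) / (2 * (γ*ζ) ^ (2*β+2)) < n) :
    ENNReal.ofReal (1 - δ) ≤
      (iid μ n) {ω | expLoss q μ (saa q n ω) - expLoss q μ (optDec q μ)
        ≤ (1/γ) * (Real.log (2/δ) / (2*n)) ^ ((β+2)/(2*β+2))} := by
  obtain ⟨hδ0, hδ1⟩ := hδ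
  have hβ1 : 0 < β + 1 := by linarith
  have hlog : 0 < Real.log (2 / δ) := Real.log_pos (by rw [lt_div_iff₀ hδ0]; linarith)
  have hpow : 0 < (γ * ζ) ^ (2 * β + 2) := Real.rpow_pos_of_pos (mul_pos hγ hζ.1) _
  have hn0 : 0 < n := Nat.cast_pos.1 ((div_pos hlog (by positivity)).trans hn)
  set t := Real.log (2 / δ) / (2 * n) with ht_def
  have ht : 0 ≤ t := by positivity
  have hr : 1 / γ * √t ^ (1 / (β + 1)) < ζ := by
    refine one_div_mul_sqrt_rpow_lt hβ1 hγ hζ.1.le ht ?_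
    rw [div_lt_iff₀ (by positivity)] at hn ⊢
    linarith
  have hεq : √t < min q (1 - q) := by
    have := hr.trans_le hζ.2
    rw [mul_comm, ← div_eq_mul_one_div, div_lt_div_iff_of_pos_right hγ] at this
    exact (Real.rpow_lt_rpow_iff (Real.sqrt_nonneg t) (lt_min hq.1 (sub_pos.2 hq.2)).le
      (by positivity)).1 this
  have hδeq : 2 * Real.exp (-2 * n * √t ^ 2) = δ := by
    rw [Real.sq_sqrt ht, show -2 * (n : ℝ) * t = -Real.log (2 / δ) by rw [ht_def]; field_simp,
      Real.exp_neg, Real.exp_log (by positivity)]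
    field_simp
  refine ofReal_one_sub_le_of_measureReal_compl_le _ ?_
  rw [← sqrt_mul_one_div_mul_sqrt_rpow γ hβ1 ht, ← hδeq]
  exact hclus.measureReal_regret_gt_le (by linarith) hγ.le hsupp hmean hq hn0
    (Real.sqrt_nonneg t) hεq hr
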